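/- Let Q = rabc be a simple quadrilateral (counterclockwise) in which r is the only possibly-reflex vertex, and let i be a point in the interior of Q. Then i sees a or i sees c (the segment from i to a, or from i to c, is contained in Q). -/

import Mathlib

open scoped BigOperators

/-- Points in the plane. -/
abbrev Pt := ℝ × ℝ

/-- 2×2 determinant (cross product) of two plane vectors. -/
noncomputable def det2 (p q : Pt) : ℝ := p.1 * q.2 - p.2 * q.1

/-- Open half-plane strictly to the left of the directed line from `p` to `q`. -/
def Lhp (p q : Pt) : Set Pt := {x | 0 < det2 (q - p) (x - p)}

/-- Open half-plane strictly to the right of the directed line from `p` to `q`. -/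
def Rhp (p q : Pt) : Set Pt := {x | det2 (q - p) (x - p) < 0}

/-- The boundary of the polygon with vertices `v 0, …, v (n-1)`:
the union of its (cyclically consecutive) edges. -/
def polyBoundary {n : ℕ} [NeZero n] (v : Fin n → Pt) : Set Pt :=
  ⋃ i : Fin n, segment ℝ (v i) (v (i + 1))

/-- `v` describes a simple polygon: at least 3 distinct vertices, and two distinct
edges may only meet at a common endpoint. -/
def IsSimplePolygon {n : ℕ} [NeZero n] (v : Fin n → Pt) : Prop :=
  3 ≤ n ∧ Function.Injective v ∧
    ∀ i j : Fin n, i ≠ j →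
      segment ℝ (v i) (v (i + 1)) ∩ segment ℝ (v j) (v (j + 1)) ⊆
        ({v i, v (i + 1)} ∩ {v j, v (j + 1)} : Set Pt)

/-- The interior of the polygon: the union of the bounded connected components of the
complement of the boundary. -/
def polyInterior {n : ℕ} [NeZero n] (v : Fin n → Pt) : Set Pt :=
  {x | x ∉ polyBoundary v ∧
    Bornology.IsBounded (connectedComponentIn (polyBoundary v)ᶜ x)}

/-- The (closed) polygonal region: interior together with boundary. -/
def polyRegion {n : ℕ} [NeZero n] (v : Fin n → Pt) : Set Pt :=
  polyBoundary v ∪ polyInterior v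

/-- Twice the signed area of the polygon. -/
noncomputable def signedArea2 {n : ℕ} [NeZero n] (v : Fin n → Pt) : ℝ :=
  ∑ i : Fin n, det2 (v i) (v (i + 1))

/-- The vertices are listed in counterclockwise order. -/
def IsCCW {n : ℕ} [NeZero n] (v : Fin n → Pt) : Prop := 0 < signedArea2 v

/-- The vertex `v i` of a counterclockwise polygon is strictly convex
(interior angle strictly less than 180°). -/
def StrictlyConvexAt {n : ℕ} [NeZero n] (v : Fin n → Pt) (i : Fin n) : Prop :=
  0 < det2 (v i - v (i - 1)) (v (i + 1) - v i)

/-- The vertex `v i` of a counterclockwise polygon is reflex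
(interior angle greater than or equal to 180°). -/
def ReflexAt {n : ℕ} [NeZero n] (v : Fin n → Pt) (i : Fin n) : Prop :=
  det2 (v i - v (i - 1)) (v (i + 1) - v i) ≤ 0

/-- The wedge of vertex `v i`:  `L(v⁻, v) ∩ R(v⁺, v) ∩ interior P`. -/
def Wedge {n : ℕ} [NeZero n] (v : Fin n → Pt) (i : Fin n) : Set Pt :=
  Lhp (v (i - 1)) (v i) ∩ Rhp (v (i + 1)) (v i) ∩ polyInterior v

/-- `x` sees `y` inside the polygon `v`: the segment `xy` is contained in the region. -/
def Sees {n : ℕ} [NeZero n] (v : Fin n → Pt) (x y : Pt) : Prop :=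
  segment ℝ x y ⊆ polyRegion v

/-- The kernel of the polygon: the points of the region that see every point of it. -/
def polyKernel {n : ℕ} [NeZero n] (v : Fin n → Pt) : Set Pt :=
  {x ∈ polyRegion v | ∀ y ∈ polyRegion v, segment ℝ x y ⊆ polyRegion v}

/-- The open triangle on three points. -/
def openTriangle (a b c : Pt) : Set Pt := interior (convexHull ℝ {a, b, c})

/-- `a b c d` (in counterclockwise order) form a strictly convex quadrilateral. -/
def StrictConvexQuad (a b c d : Pt) : Prop :=
  0 < det2 (b - a) (c - b) ∧ 0 < det2 (c - b) (d - c) ∧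
    0 < det2 (d - c) (a - d) ∧ 0 < det2 (a - d) (b - a)

/-- The closed region of a quadrilateral cell. -/
noncomputable def quadSet (q : Pt × Pt × Pt × Pt) : Set Pt :=
  convexHull ℝ {q.1, q.2.1, q.2.2.1, q.2.2.2}

/-- The closed region of a triangular cell. -/
noncomputable def triSet (t : Pt × Pt × Pt) : Set Pt :=
  convexHull ℝ {t.1, t.2.1, t.2.2}

/-- The vertices of a quadrilateral cell. -/
noncomputable def quadVerts (q : Pt × Pt × Pt × Pt) : Finset Pt :=
  {q.1, q.2.1, q.2.2.1, q.2.2.2}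

/-- The vertices of a triangular cell. -/
noncomputable def triVerts (t : Pt × Pt × Pt) : Finset Pt :=
  {t.1, t.2.1, t.2.2}

/-- A strictly convex quadrangulation of a finite planar point set `S`:
a decomposition of `conv S` into strictly convex quadrilaterals and at most one
(nondegenerate) triangle, with pairwise disjoint interiors, whose vertex set contains
`S`, and such that no point of `S` is interior to a cell. -/
structure ConvexQuadrangulation (S : Finset Pt) where
  quads : Finset (Pt × Pt × Pt × Pt)
  tris : Finset (Pt × Pt × Pt)
  tris_card : tris.card ≤ 1
  quads_convex : ∀ q ∈ quads, StrictConvexQuad q.1 q.2.1 q.2.2.1 q.2.2.2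
  tris_nondeg : ∀ t ∈ tris, 0 < det2 (t.2.1 - t.1) (t.2.2 - t.2.1)
  covers : ((⋃ q ∈ quads, quadSet q) ∪ ⋃ t ∈ tris, triSet t) = convexHull ℝ (S : Set Pt)
  cells_disjoint : ((quadSet '' quads) ∪ (triSet '' tris)).Pairwise
    fun A B => interior A ∩ interior B = ∅
  verts_cover : (S : Set Pt) ⊆
    ((quads.biUnion quadVerts ∪ tris.biUnion triVerts : Finset Pt) : Set Pt)
  no_pt_in_quad_interior : ∀ q ∈ quads, ∀ p ∈ S, p ∉ interior (quadSet q)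
  no_pt_in_tri_interior : ∀ t ∈ tris, ∀ p ∈ S, p ∉ interior (triSet t)

/-- The Steiner points of a quadrangulation: vertices of the decomposition not in `S`. -/
noncomputable def steinerPoints (S : Finset Pt) (Q : ConvexQuadrangulation S) : Finset Pt :=
  (Q.quads.biUnion quadVerts ∪ Q.tris.biUnion triVerts) \ S


section Aux

open Set Bornology

lemma det2_self (u : Pt) : det2 u u = 0 := by simp [det2]; ring

lemma det2_cyc (a b c : Pt) : det2 (b - a) (c - a) = det2 (c - b) (a - b) := by
  simp only [det2, Prod.fst_sub, Prod.snd_sub]; ring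

lemma det2_affine (u w a b : Pt) (t : ℝ) :
    det2 u ((1 - t) • a + t • b - w)
      = (1 - t) * det2 u (a - w) + t * det2 u (b - w) := by
  simp only [det2, Prod.fst_sub, Prod.snd_sub, Prod.fst_add, Prod.snd_add,
    Prod.smul_fst, Prod.smul_snd, smul_eq_mul]
  ring

lemma det2_ray (u w x d : Pt) (t : ℝ) :
    det2 u (x + t • d - w) = det2 u (x - w) + t * det2 u d := by
  simp only [det2, Prod.fst_sub, Prod.snd_sub, Prod.fst_add, Prod.snd_add,
    Prod.smul_fst, Prod.smul_snd, smul_eq_mul]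
  ring

lemma det2_continuous (u w : Pt) : Continuous fun x : Pt => det2 u (x - w) := by
  have : (fun x : Pt => det2 u (x - w))
      = fun x : Pt => u.1 * (x.2 - w.2) - u.2 * (x.1 - w.1) := by
    funext x; simp [det2]
  rw [this]; fun_prop

lemma bary_sum (p q s x : Pt) :
    det2 (s - q) (x - q) + det2 (p - s) (x - s) + det2 (q - p) (x - p)
      = det2 (q - p) (s - p) := by
  simp only [det2, Prod.fst_sub, Prod.snd_sub]; ring

lemma bary_pt (p q s x : Pt) :
    det2 (s - q) (x - q) • p + det2 (p - s) (x - s) • q + det2 (q - p) (x - p) • s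
      = det2 (q - p) (s - p) • x := by
  apply Prod.ext <;>
  · simp only [det2, Prod.fst_sub, Prod.snd_sub, Prod.fst_add, Prod.snd_add,
      Prod.smul_fst, Prod.smul_snd, smul_eq_mul]
    ring

lemma halfplane_convex (u w : Pt) : Convex ℝ {x : Pt | 0 ≤ det2 u (x - w)} := by
  intro x hx y hy a b ha hb hab
  simp only [Set.mem_setOf_eq] at *
  have hb' : b = 1 - a := by linarith
  subst hb'
  have : det2 u (a • x + (1 - a) • y - w)
      = a * det2 u (x - w) + (1 - a) * det2 u (y - w) := by
    simp only [det2, Prod.fst_sub, Prod.snd_sub, Prod.fst_add, Prod.snd_add,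
      Prod.smul_fst, Prod.smul_snd, smul_eq_mul]
    ring
  rw [this]; positivity

lemma coeff_zero_mem_segment (p q s x : Pt) (hA : 0 < det2 (q - p) (s - p))
    (h1 : 0 ≤ det2 (s - q) (x - q)) (h2 : 0 ≤ det2 (p - s) (x - s))
    (h3 : det2 (q - p) (x - p) = 0) : x ∈ segment ℝ p q := by
  have hsum := bary_sum p q s x
  have hpt := bary_pt p q s x
  set α := det2 (s - q) (x - q) with hα
  set β := det2 (p - s) (x - s) with hβ
  set A := det2 (q - p) (s - p) with hAdef
  rw [h3] at hsum hpt
  refine ⟨α / A, β / A, by positivity, by positivity, by field_simp; linarith, ?_⟩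
  have hx2 : x = A⁻¹ • (α • p + β • q + (0:ℝ) • s) := by
    rw [hpt, smul_smul, inv_mul_cancel₀ hA.ne', one_smul]
  rw [hx2]
  match_scalars <;> field_simp <;> ring

lemma tri_mem_iff (p q s : Pt) (hA : 0 < det2 (q - p) (s - p)) (x : Pt) :
    x ∈ convexHull ℝ ({p, q, s} : Set Pt) ↔
      0 ≤ det2 (s - q) (x - q) ∧ 0 ≤ det2 (p - s) (x - s) ∧ 0 ≤ det2 (q - p) (x - p) := by
  constructor
  · intro hx
    have hsub : convexHull ℝ ({p, q, s} : Set Pt) ⊆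
        {x : Pt | 0 ≤ det2 (s - q) (x - q)} ∩ ({x : Pt | 0 ≤ det2 (p - s) (x - s)} ∩
          {x : Pt | 0 ≤ det2 (q - p) (x - p)}) := by
      apply convexHull_min
      · rintro z (rfl | rfl | rfl) <;>
        · refine ⟨?_, ?_, ?_⟩ <;>
          · show (0:ℝ) ≤ _
            simp only [det2, Prod.fst_sub, Prod.snd_sub] at hA ⊢
            nlinarith [hA]
      · exact (halfplane_convex _ _).inter ((halfplane_convex _ _).inter (halfplane_convex _ _))
    exact hsub hx
  · rintro ⟨h1, h2, h3⟩
    have hsum := bary_sum p q s x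
    have hpt := bary_pt p q s x
    set α := det2 (s - q) (x - q) with hα
    set β := det2 (p - s) (x - s) with hβ
    set γ := det2 (q - p) (x - p) with hγ
    set A := det2 (q - p) (s - p) with hAdef
    have hx : x = A⁻¹ • (α • p + β • q + γ • s) := by
      rw [hpt, smul_smul, inv_mul_cancel₀ hA.ne', one_smul]
    have hP : p ∈ convexHull ℝ ({p, q, s} : Set Pt) := subset_convexHull _ _ (by simp)
    have hQ : q ∈ convexHull ℝ ({p, q, s} : Set Pt) := subset_convexHull _ _ (by simp)
    have hS : s ∈ convexHull ℝ ({p, q, s} : Set Pt) := subset_convexHull _ _ (by simp)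
    by_cases hμ : α + β = 0
    · have hα0 : α = 0 := by linarith
      have hβ0 : β = 0 := by linarith
      have hγA : γ = A := by linarith
      have : x = s := by
        rw [hx, hα0, hβ0, hγA]; simp [smul_smul, inv_mul_cancel₀ hA.ne']
      rw [this]; exact hS
    · have hμpos : 0 < α + β := lt_of_le_of_ne (by positivity) (Ne.symm hμ)
      set μ := α + β with hμdef
      set m := (α / μ) • p + (β / μ) • q with hm
      have hmmem : m ∈ convexHull ℝ ({p, q, s} : Set Pt) := by
        apply (convex_convexHull ℝ _).segment_subset hP hQ
        exact ⟨α / μ, β / μ, by positivity, by positivity, by field_simp; linarith, rfl⟩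
      have hxmem : x ∈ segment ℝ m s := by
        refine ⟨μ / A, γ / A, by positivity, by positivity, by field_simp; linarith, ?_⟩
        rw [hx, hm]
        match_scalars <;> field_simp <;> ring
      exact (convex_convexHull ℝ _).segment_subset hmmem hS hxmem

/-- Strict separation of a point from a triangle by one of its edges. -/
lemma tri_sep (p q s x : Pt) (hA : 0 < det2 (q - p) (s - p))
    (hx : x ∉ convexHull ℝ ({p, q, s} : Set Pt)) :
    ∃ u w : Pt, u ≠ 0 ∧ det2 u (x - w) < 0 ∧
      ∀ z ∈ convexHull ℝ ({p, q, s} : Set Pt), 0 ≤ det2 u (z - w) := by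
  rw [tri_mem_iff p q s hA x] at hx
  push_neg at hx
  have hqp : q - p ≠ 0 := by
    intro h
    have h0 : det2 (q - p) (s - p) = 0 := by rw [h]; simp [det2]
    linarith
  have hsq : s - q ≠ 0 := by
    intro h
    have hsq' : s = q := sub_eq_zero.1 h
    have h0 : det2 (q - p) (s - p) = 0 := by rw [hsq']; exact det2_self _
    linarith
  have hps : p - s ≠ 0 := by
    intro h
    have hps' : p = s := sub_eq_zero.1 h
    have h0 : det2 (q - p) (s - p) = 0 := by rw [← hps', sub_self]; simp [det2]
    linarith
  by_cases h1 : 0 ≤ det2 (s - q) (x - q)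
  · by_cases h2 : 0 ≤ det2 (p - s) (x - s)
    · have h3 := hx h1 h2
      exact ⟨q - p, p, hqp, h3, fun z hz => ((tri_mem_iff p q s hA z).1 hz).2.2⟩
    · exact ⟨p - s, s, hps, lt_of_not_ge h2, fun z hz => ((tri_mem_iff p q s hA z).1 hz).2.1⟩
  · exact ⟨s - q, q, hsq, lt_of_not_ge h1, fun z hz => ((tri_mem_iff p q s hA z).1 hz).1⟩

/-- Escape to infinity: if two half-plane constraints exclude `x` and every point of
`B` satisfies one of them, the component of `x` in `Bᶜ` is unbounded. -/
lemma ray_escape (B : Set Pt) (x : Pt) (u1 w1 u2 w2 : Pt) (hu1 : u1 ≠ 0)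
    (h1 : det2 u1 (x - w1) < 0) (h2 : det2 u2 (x - w2) < 0)
    (hB : ∀ z ∈ B, 0 ≤ det2 u1 (z - w1) ∨ 0 ≤ det2 u2 (z - w2)) :
    ¬ Bornology.IsBounded (connectedComponentIn Bᶜ x) := by
  set ε : ℝ := if det2 u2 u1 ≤ 0 then 1 else -1 with hε
  set d : Pt := ε • u1 with hd
  have hεne : ε ≠ 0 := by
    rw [hε]; split <;> norm_num
  have hdne : d ≠ 0 := smul_ne_zero hεne hu1
  have hd1 : det2 u1 d = 0 := by
    rw [hd]; simp only [det2, Prod.smul_fst, Prod.smul_snd, smul_eq_mul]; ring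
  have hd2 : det2 u2 d ≤ 0 := by
    have : det2 u2 d = ε * det2 u2 u1 := by
      rw [hd]; simp only [det2, Prod.smul_fst, Prod.smul_snd, smul_eq_mul]; ring
    rw [this, hε]
    split
    · next h => simpa using h
    · next h => nlinarith [lt_of_not_ge h]
  set R : Set Pt := (fun t : ℝ => x + t • d) '' Set.Ici 0 with hR
  have hRB : R ⊆ Bᶜ := by
    rintro z ⟨t, ht, rfl⟩
    intro hzB
    rcases hB _ hzB with h | h
    · rw [det2_ray, hd1, mul_zero, add_zero] at h; linarith
    · rw [det2_ray] at h
      have : t * det2 u2 d ≤ 0 := mul_nonpos_of_nonneg_of_nonpos ht hd2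
      linarith
  have hxR : x ∈ R := ⟨0, Set.self_mem_Ici, by simp⟩
  have hRconn : IsPreconnected R := by
    apply isPreconnected_Ici.image
    apply Continuous.continuousOn
    fun_prop
  have hRsub : R ⊆ connectedComponentIn Bᶜ x :=
    hRconn.subset_connectedComponentIn hxR hRB
  intro hbdd
  have hRbdd : Bornology.IsBounded R := hbdd.subset hRsub
  rw [isBounded_iff_forall_norm_le] at hRbdd
  obtain ⟨C, hC⟩ := hRbdd
  have hxC : ‖x‖ ≤ C := hC x hxR
  have hdpos : 0 < ‖d‖ := norm_pos_iff.2 hdne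
  set t : ℝ := (C + ‖x‖ + 1) / ‖d‖ with htdef
  have hxnn : 0 ≤ ‖x‖ := norm_nonneg x
  have htpos : 0 ≤ t := by
    apply div_nonneg _ hdpos.le
    linarith
  have hy : x + t • d ∈ R := ⟨t, htpos, rfl⟩
  have hyC := hC _ hy
  have h1' : ‖t • d‖ ≤ ‖x + t • d‖ + ‖x‖ := by
    calc ‖t • d‖ = ‖x + t • d - x‖ := by congr 1; abel
    _ ≤ ‖x + t • d‖ + ‖x‖ := norm_sub_le _ _
  have h2' : ‖t • d‖ = t * ‖d‖ := by
    rw [norm_smul, Real.norm_eq_abs, abs_of_nonneg htpos]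
  have h3' : t * ‖d‖ = C + ‖x‖ + 1 := by
    rw [htdef, div_mul_cancel₀ _ hdpos.ne']
  linarith

end Aux

/-- Visibility claim of Section 3.1.3.  Let `rabc` be a simple counterclockwise
quadrilateral in which `r` is the only possibly-reflex vertex (`a`, `b`, `c` are
strictly convex), and let `i` be a point in its interior.  Then `i` sees `a` or `i`
sees `c`. -/
theorem interior_point_sees_a_or_c (v : Fin 4 → Pt)
    (hsimple : IsSimplePolygon v) (hccw : IsCCW v)
    (hA : StrictlyConvexAt v 1) (hB : StrictlyConvexAt v 2) (hC : StrictlyConvexAt v 3)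
    (i : Pt) (hi : i ∈ polyInterior v) :
    Sees v i (v 1) ∨ Sees v i (v 3) := by
  have hA' : 0 < det2 (v 1 - v 0) (v 2 - v 1) := hA
  have hC' : 0 < det2 (v 3 - v 2) (v 0 - v 3) := hC
  have hA1 : 0 < det2 (v 1 - v 0) (v 2 - v 0) := by
    have h : det2 (v 1 - v 0) (v 2 - v 0) = det2 (v 1 - v 0) (v 2 - v 1) := by
      simp only [det2, Prod.fst_sub, Prod.snd_sub]; ring
    rw [h]; exact hA'
  have hA2 : 0 < det2 (v 2 - v 0) (v 3 - v 0) := by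
    have h : det2 (v 2 - v 0) (v 3 - v 0) = det2 (v 3 - v 2) (v 0 - v 3) := by
      simp only [det2, Prod.fst_sub, Prod.snd_sub]; ring
    rw [h]; exact hC'
  set T1 := convexHull ℝ ({v 0, v 1, v 2} : Set Pt) with hT1def
  set T2 := convexHull ℝ ({v 0, v 2, v 3} : Set Pt) with hT2def
  have m0 : v 0 ∈ T1 := subset_convexHull _ _ (by simp)
  have m1 : v 1 ∈ T1 := subset_convexHull _ _ (by simp)
  have m2 : v 2 ∈ T1 := subset_convexHull _ _ (by simp)
  have m0' : v 0 ∈ T2 := subset_convexHull _ _ (by simp)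
  have m2' : v 2 ∈ T2 := subset_convexHull _ _ (by simp)
  have m3 : v 3 ∈ T2 := subset_convexHull _ _ (by simp)
  have hedge : ∀ j : Fin 4, segment ℝ (v j) (v (j + 1)) ⊆ polyBoundary v := by
    intro j z hz
    exact Set.mem_iUnion.2 ⟨j, hz⟩
  have e0 : segment ℝ (v 0) (v 1) ⊆ polyBoundary v := hedge 0
  have e1 : segment ℝ (v 1) (v 2) ⊆ polyBoundary v := hedge 1
  have e2 : segment ℝ (v 2) (v 3) ⊆ polyBoundary v := hedge 2
  have e3 : segment ℝ (v 3) (v 0) ⊆ polyBoundary v := hedge 3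
  have hBd : polyBoundary v ⊆ T1 ∪ T2 := by
    intro z hz
    obtain ⟨j, hj⟩ := Set.mem_iUnion.1 hz
    fin_cases j
    · exact Or.inl ((convex_convexHull ℝ _).segment_subset m0 m1 hj)
    · exact Or.inl ((convex_convexHull ℝ _).segment_subset m1 m2 hj)
    · exact Or.inr ((convex_convexHull ℝ _).segment_subset m2' m3 hj)
    · exact Or.inr ((convex_convexHull ℝ _).segment_subset m3 m0' hj)
  obtain ⟨hib, hibdd⟩ : i ∉ polyBoundary v ∧
      Bornology.IsBounded (connectedComponentIn (polyBoundary v)ᶜ i) := hi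
  -- i is in the union of the two triangles
  have hiU : i ∈ T1 ∪ T2 := by
    by_contra hni
    have hi1 : i ∉ T1 := fun h => hni (Or.inl h)
    have hi2 : i ∉ T2 := fun h => hni (Or.inr h)
    obtain ⟨u1, w1, hu1, hneg1, hpos1⟩ := tri_sep (v 0) (v 1) (v 2) i hA1 hi1
    obtain ⟨u2, w2, hu2, hneg2, hpos2⟩ := tri_sep (v 0) (v 2) (v 3) i hA2 hi2
    exact ray_escape (polyBoundary v) i u1 w1 u2 w2 hu1 hneg1 hneg2
      (fun z hz => (hBd hz).imp (hpos1 z) (hpos2 z)) hibdd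
  -- cyclic determinant identities
  have c1 : det2 (v 2 - v 1) (v 0 - v 1) = det2 (v 1 - v 0) (v 2 - v 0) := by
    simp only [det2, Prod.fst_sub, Prod.snd_sub]; ring
  have c1' : det2 (v 0 - v 2) (v 1 - v 2) = det2 (v 1 - v 0) (v 2 - v 0) := by
    simp only [det2, Prod.fst_sub, Prod.snd_sub]; ring
  have c2 : det2 (v 3 - v 2) (v 0 - v 2) = det2 (v 2 - v 0) (v 3 - v 0) := by
    simp only [det2, Prod.fst_sub, Prod.snd_sub]; ring
  have c3 : det2 (v 0 - v 3) (v 2 - v 3) = det2 (v 2 - v 0) (v 3 - v 0) := by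
    simp only [det2, Prod.fst_sub, Prod.snd_sub]; ring
  -- points of the open diagonal (indeed all of it, off the interior) are on the boundary
  have hdiag : ∀ y, y ∈ segment ℝ (v 0) (v 2) → y ∉ interior (T1 ∪ T2) →
      y ∈ polyBoundary v := by
    rintro y ⟨a, b, ha, hb, hab, rfl⟩ hyni
    have ha' : a = 1 - b := by linarith
    subst ha'
    rcases eq_or_lt_of_le hb with hb0 | hbpos
    · have hy0 : (1 - b) • v 0 + b • v 2 = v 0 := by rw [← hb0]; simp
      rw [hy0]; exact e0 (left_mem_segment ℝ _ _)
    have hble : b ≤ 1 := by linarith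
    rcases eq_or_lt_of_le hble with hb1 | hblt
    · have hy2 : (1 - b) • v 0 + b • v 2 = v 2 := by rw [hb1]; simp
      rw [hy2]; exact e1 (right_mem_segment ℝ _ _)
    exfalso; apply hyni
    refine mem_interior.2 ⟨{x | 0 < det2 (v 1 - v 0) (x - v 0)} ∩
      {x | 0 < det2 (v 2 - v 1) (x - v 1)} ∩ {x | 0 < det2 (v 3 - v 2) (x - v 2)} ∩
      {x | 0 < det2 (v 0 - v 3) (x - v 3)}, ?_, ?_, ?_⟩
    · rintro x ⟨⟨⟨hx1, hx2⟩, hx3⟩, hx4⟩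
      rcases le_or_gt 0 (det2 (v 2 - v 0) (x - v 0)) with hcase | hcase
      · exact Or.inr ((tri_mem_iff _ _ _ hA2 x).2 ⟨hx3.le, hx4.le, hcase⟩)
      · refine Or.inl ((tri_mem_iff _ _ _ hA1 x).2 ⟨hx2.le, ?_, hx1.le⟩)
        have hid : det2 (v 0 - v 2) (x - v 2) = -det2 (v 2 - v 0) (x - v 0) := by
          simp only [det2, Prod.fst_sub, Prod.snd_sub]; ring
        rw [hid]; linarith
    · exact (((isOpen_lt continuous_const (det2_continuous _ _)).inter
        (isOpen_lt continuous_const (det2_continuous _ _))).inter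
        (isOpen_lt continuous_const (det2_continuous _ _))).inter
        (isOpen_lt continuous_const (det2_continuous _ _))
    · have z1 : det2 (v 1 - v 0) (v 0 - v 0) = 0 := by simp [det2]
      have z2 : det2 (v 2 - v 1) (v 2 - v 1) = 0 := det2_self _
      have z3 : det2 (v 3 - v 2) (v 2 - v 2) = 0 := by simp [det2]
      have z4 : det2 (v 0 - v 3) (v 0 - v 3) = 0 := det2_self _
      refine ⟨⟨⟨?_, ?_⟩, ?_⟩, ?_⟩
      · show 0 < det2 (v 1 - v 0) ((1 - b) • v 0 + b • v 2 - v 0)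
        rw [det2_affine, z1, mul_zero, zero_add]
        exact mul_pos hbpos hA1
      · show 0 < det2 (v 2 - v 1) ((1 - b) • v 0 + b • v 2 - v 1)
        rw [det2_affine, c1, det2_self, mul_zero, add_zero]
        exact mul_pos (by linarith) hA1
      · show 0 < det2 (v 3 - v 2) ((1 - b) • v 0 + b • v 2 - v 2)
        rw [det2_affine, c2, z3, mul_zero, add_zero]
        exact mul_pos (by linarith) hA2
      · show 0 < det2 (v 0 - v 3) ((1 - b) • v 0 + b • v 2 - v 3)
        rw [det2_affine, det2_self, mul_zero, zero_add, c3]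
        exact mul_pos hbpos hA2
  -- non-interior points of the union are on the polygon boundary
  have hFr : ∀ y, y ∈ T1 ∪ T2 → y ∉ interior (T1 ∪ T2) → y ∈ polyBoundary v := by
    intro y hy hyni
    rcases hy with hy1 | hy2
    · obtain ⟨k1, k2, k3⟩ := (tri_mem_iff _ _ _ hA1 y).1 hy1
      rcases eq_or_lt_of_le k3 with h3 | h3
      · exact e0 (coeff_zero_mem_segment (v 0) (v 1) (v 2) y hA1 k1 k2 h3.symm)
      rcases eq_or_lt_of_le k1 with h1 | h1
      · exact e1 (coeff_zero_mem_segment (v 1) (v 2) (v 0) y (c1 ▸ hA1) k2 k3 h1.symm)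
      rcases eq_or_lt_of_le k2 with h2 | h2
      · have hseg := coeff_zero_mem_segment (v 2) (v 0) (v 1) y (c1' ▸ hA1) k3 k1 h2.symm
        rw [segment_symm] at hseg
        exact hdiag y hseg hyni
      · exfalso; apply hyni
        refine mem_interior.2 ⟨{x | 0 < det2 (v 2 - v 1) (x - v 1)} ∩
          {x | 0 < det2 (v 0 - v 2) (x - v 2)} ∩ {x | 0 < det2 (v 1 - v 0) (x - v 0)},
          ?_, ?_, ⟨⟨h1, h2⟩, h3⟩⟩
        · rintro x ⟨⟨hx1, hx2⟩, hx3⟩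
          exact Or.inl ((tri_mem_iff _ _ _ hA1 x).2 ⟨hx1.le, hx2.le, hx3.le⟩)
        · exact ((isOpen_lt continuous_const (det2_continuous _ _)).inter
            (isOpen_lt continuous_const (det2_continuous _ _))).inter
            (isOpen_lt continuous_const (det2_continuous _ _))
    · obtain ⟨k1, k2, k3⟩ := (tri_mem_iff _ _ _ hA2 y).1 hy2
      rcases eq_or_lt_of_le k3 with h3 | h3
      · exact hdiag y (coeff_zero_mem_segment (v 0) (v 2) (v 3) y hA2 k1 k2 h3.symm) hyni
      rcases eq_or_lt_of_le k1 with h1 | h1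
      · exact e2 (coeff_zero_mem_segment (v 2) (v 3) (v 0) y (c2 ▸ hA2) k2 k3 h1.symm)
      rcases eq_or_lt_of_le k2 with h2 | h2
      · exact e3 (coeff_zero_mem_segment (v 3) (v 0) (v 2) y (c3 ▸ hA2) k3 k1 h2.symm)
      · exfalso; apply hyni
        refine mem_interior.2 ⟨{x | 0 < det2 (v 3 - v 2) (x - v 2)} ∩
          {x | 0 < det2 (v 0 - v 3) (x - v 3)} ∩ {x | 0 < det2 (v 2 - v 0) (x - v 0)},
          ?_, ?_, ⟨⟨h1, h2⟩, h3⟩⟩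
        · rintro x ⟨⟨hx1, hx2⟩, hx3⟩
          exact Or.inr ((tri_mem_iff _ _ _ hA2 x).2 ⟨hx1.le, hx2.le, hx3.le⟩)
        · exact ((isOpen_lt continuous_const (det2_continuous _ _)).inter
            (isOpen_lt continuous_const (det2_continuous _ _))).inter
            (isOpen_lt continuous_const (det2_continuous _ _))
  -- the union of the triangles is contained in the polygonal region
  have hT1c : IsCompact T1 := (Set.toFinite _).isCompact_convexHull (𝕜 := ℝ)
  have hT2c : IsCompact T2 := (Set.toFinite _).isCompact_convexHull (𝕜 := ℝ)
  have hUclosed : IsClosed (T1 ∪ T2) := hT1c.isClosed.union hT2c.isClosed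
  have hUbdd : Bornology.IsBounded (T1 ∪ T2) := (hT1c.union hT2c).isBounded
  have hReg : T1 ∪ T2 ⊆ polyRegion v := by
    intro y hy
    by_cases hyb : y ∈ polyBoundary v
    · exact Set.mem_union_left _ hyb
    · refine Set.mem_union_right _ ?_
      have hyint : y ∈ interior (T1 ∪ T2) := by
        by_contra hni; exact hyb (hFr y hy hni)
      refine ⟨hyb, ?_⟩
      have hK : connectedComponentIn (polyBoundary v)ᶜ y ⊆ interior (T1 ∪ T2) := by
        apply IsPreconnected.subset_left_of_subset_union isOpen_interior
          hUclosed.isOpen_compl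
        · exact Set.disjoint_left.2 fun z hz hz' => hz' (interior_subset hz)
        · intro z hz
          have hzb : z ∉ polyBoundary v := connectedComponentIn_subset _ _ hz
          by_cases hzU : z ∈ T1 ∪ T2
          · by_cases hzi : z ∈ interior (T1 ∪ T2)
            · exact Or.inl hzi
            · exact absurd (hFr z hzU hzi) hzb
          · exact Or.inr hzU
        · exact ⟨y, mem_connectedComponentIn hyb, hyint⟩
        · exact isPreconnected_connectedComponentIn
      exact hUbdd.subset (hK.trans interior_subset)
  rcases hiU with hiT | hiT
  · exact Or.inl fun z hz =>
      hReg (Or.inl ((convex_convexHull ℝ _).segment_subset hiT m1 hz))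
  · exact Or.inr fun z hz =>
      hReg (Or.inr ((convex_convexHull ℝ _).segment_subset hiT m3 hz))
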